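/- For all n ≥ 0, J(n+1) = F(n+1) + sum over j from 2 to n of J(j−1)·F(n+1−j), where J is the Jacobsthal sequence and F the Fibonacci sequence. -/
import Mathlib


def J : ℕ → ℕ
  | 0 => 0
  | 1 => 1
  | n + 2 => J (n + 1) + 2 * J n

def F : ℕ → ℕ
  | 0 => 0
  | 1 => 1
  | n + 2 => F (n + 1) + F n

theorem stmt15 (n : ℕ) :
    J (n + 1) = F (n + 1) + ∑ j ∈ Finset.Icc 2 n, J (j - 1) * F (n + 1 - j) := by
  induction n using Nat.strong_induction_on with
  | _ n ih =>
    match n, ih with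
    | 0, _ => simp [J, F]
    | 1, _ => simp [J, F]
    | n + 2, ih =>
      have h1 := ih n (by omega)
      have h2 := ih (n + 1) (by omega)
      have key : ∀ j ∈ Finset.Icc 2 (n + 1),
          J (j - 1) * F (n + 2 + 1 - j) =
            J (j - 1) * F (n + 1 + 1 - j) + J (j - 1) * F (n + 1 - j) := by
        intro j hj
        simp only [Finset.mem_Icc] at hj
        rw [show n + 2 + 1 - j = (n + 1 - j) + 2 by omega,
          show n + 1 + 1 - j = (n + 1 - j) + 1 by omega,
          show F ((n + 1 - j) + 2) = F ((n + 1 - j) + 1) + F (n + 1 - j) from rfl,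
          Nat.mul_add]
      have e2 : ∑ j ∈ Finset.Icc 2 (n + 1), J (j - 1) * F (n + 1 - j) =
          ∑ j ∈ Finset.Icc 2 n, J (j - 1) * F (n + 1 - j) := by
        rcases n with _ | m
        · decide
        · rw [Finset.sum_Icc_succ_top (by omega : 2 ≤ m + 1 + 1)]
          simp [Nat.sub_self, F]
      rw [Finset.sum_Icc_succ_top (by omega : 2 ≤ n + 2),
        Finset.sum_congr rfl key, Finset.sum_add_distrib, e2]
      rw [show n + 2 + 1 - (n + 2) = 1 by omega,
        show n + 2 - 1 = n + 1 by omega]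
      simp only [show F 0 = 0 from rfl, show F 1 = 1 from rfl, Nat.mul_zero, Nat.mul_one,
        Nat.add_zero]
      rw [show J (n + 2 + 1) = J (n + 2) + 2 * J (n + 1) from rfl,
        show F (n + 2 + 1) = F (n + 2) + F (n + 1) from rfl,
        show J (n + 2) = J (n + 1 + 1) from rfl, show F (n + 2) = F (n + 1 + 1) from rfl]
      omega
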